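/- Balanced–unbalanced factorization (coefficient form of equations (4.5)–(4.6)). Let d ≥ 1, n ≥ 1, and let Λ ⊆ ℝ^d be a Borel set of finite Lebesgue measure. For a signed graph E on a finite vertex set A ⊆ {1,…,n} and x ∈ (ℝ^d)^A set w(E,x) := ∏_{(i,j,s)∈E} (−𝟙[‖x_i − s·x_j‖₂ ≤ 1]). Then Σ_{E signed graph on {1,…,n}} ∫_{Λ^n} w(E,x) dx = Σ_{A ⊆ {1,…,n}} ( Σ_{E_b balanced signed graph on A} ∫_{Λ^A} w(E_b,x) dx ) · ( Σ_{E_u signed graph on {1,…,n}∖A such that every connected component of E_u on the vertex set {1,…,n}∖A contains an unbalanced cycle} ∫_{Λ^{{1,…,n}∖A}} w(E_u,x) dx ). -/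

import Mathlib

open MeasureTheory
open scoped ENNReal Classical

noncomputable section

/-- A signed graph on a vertex set `V` is encoded as a finite set of pairs
`(e, s)` where `e ∈ Sym2 V` is an unordered pair of vertices and `s ∈ {±1} = ℤˣ`
is a sign; properness (no loops) is imposed separately via `¬ e.IsDiag`.
`IsBalancedSG G` says every cycle of `G` is balanced: there is no pair of parallel
edges of opposite signs (a two-edge cycle, always unbalanced), and every cycle on
`k ≥ 3` distinct vertices has sign product `+1`. -/
def IsBalancedSG {V : Type*} (G : Finset (Sym2 V × ℤˣ)) : Prop :=
  (∀ i j : V, i ≠ j → ¬ ((s(i, j), (1 : ℤˣ)) ∈ G ∧ (s(i, j), (-1 : ℤˣ)) ∈ G)) ∧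
  ∀ k : ℕ, ∀ v : Fin (k + 3) → V, Function.Injective v →
    ∀ σ : Fin (k + 3) → ℤˣ, (∀ m : Fin (k + 3), (s(v m, v (m + 1)), σ m) ∈ G) →
      (∏ m, σ m) = 1

/-- The Mayer factor `−𝟙[‖x_i − s·x_j‖ ≤ 1]` attached to a signed edge `({i,j}, s)`. -/
def sgFactor {V : Type*} {d : ℕ} (x : V → EuclideanSpace ℝ (Fin d))
    (p : Sym2 V × ℤˣ) : ℝ :=
  Sym2.lift ⟨fun i j => if ‖x i - (((p.2 : ℤ) : ℝ)) • x j‖ ≤ 1 then (-1 : ℝ) else 0, by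
    intro i j
    beta_reduce
    rcases Int.units_eq_one_or p.2 with h | h <;> rw [h]
    · have h1 : (((1 : ℤˣ) : ℤ) : ℝ) = 1 := by norm_num
      rw [h1, one_smul, one_smul, norm_sub_rev]
    · have h1 : (((-1 : ℤˣ) : ℤ) : ℝ) = -1 := by norm_num
      rw [h1, neg_one_smul, neg_one_smul, sub_neg_eq_add, sub_neg_eq_add, add_comm]⟩ p.1

/-- The underlying simple graph of a signed graph. -/
def sgGraph {V : Type*} (G : Finset (Sym2 V × ℤˣ)) : SimpleGraph V where
  Adj i j := i ≠ j ∧ ∃ s : ℤˣ, (s(i, j), s) ∈ G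
  symm := ⟨by
    rintro i j ⟨hne, s, hs⟩
    exact ⟨hne.symm, s, by rwa [Sym2.eq_swap]⟩⟩
  loopless := ⟨by rintro i ⟨h, -⟩; exact h rfl⟩

/-- `G` contains an unbalanced cycle all of whose vertices lie in `W`. -/
def HasUnbalancedCycleWithin {V : Type*} (G : Finset (Sym2 V × ℤˣ)) (W : Set V) : Prop :=
  (∃ i j : V, i ≠ j ∧ i ∈ W ∧ j ∈ W ∧
      (s(i, j), (1 : ℤˣ)) ∈ G ∧ (s(i, j), (-1 : ℤˣ)) ∈ G) ∨
  (∃ k : ℕ, ∃ v : Fin (k + 3) → V, Function.Injective v ∧ (∀ m, v m ∈ W) ∧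
    ∃ σ : Fin (k + 3) → ℤˣ,
      (∀ m : Fin (k + 3), (s(v m, v (m + 1)), σ m) ∈ G) ∧ (∏ m, σ m) = -1)

/-- Every connected component of `G` (isolated vertices included) contains an
unbalanced cycle. -/
def SpansUnbalanced {V : Type*} (G : Finset (Sym2 V × ℤˣ)) : Prop :=
  ∀ i : V, HasUnbalancedCycleWithin G {j | (sgGraph G).Reachable i j}

/-!
Call a vertex balanced when its connected component contains no unbalanced cycle, and let `A` be
the set of balanced vertices of a signed graph `G`. No edge joins `A` to its complement, so `G` is
the disjoint union of its restriction to `A`, which is balanced, and its restriction to `Aᶜ`, every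
component of which contains an unbalanced cycle. Conversely, gluing a balanced graph on `A` and
such a graph on `Aᶜ` gives a graph whose balanced vertices are exactly `A`. Hence the signed
graphs with balanced part `A` correspond to these pairs, their Mayer weights factor over `A` and
`Aᶜ`, and by Fubini so do their integrals over `Λ^A × Λ^{Aᶜ}`.
-/

section PiSplit

variable {ι E : Type*} [Fintype ι]

theorem setIntegral_forall_mem_eq_integral_pi [MeasureSpace E] [SigmaFinite (volume : Measure E)]
    (Λ : Set E) (F : (ι → E) → ℝ) :
    ∫ x in {x : ι → E | ∀ i, x i ∈ Λ}, F x =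
      ∫ x, F x ∂(Measure.pi fun _ => volume.restrict Λ) := by
  rw [← Measure.restrict_pi_pi]
  congr 2
  ext
  simp

variable [DecidableEq ι]

def Finset.sumComplEquiv (A : Finset ι) : ↥A ⊕ ↥Aᶜ ≃ ι :=
  (Equiv.sumCongr (Equiv.refl _) (Equiv.subtypeEquivRight fun _ => Finset.mem_compl)).trans
    (Equiv.sumCompl (· ∈ A))

-- No integrability is needed: `integral_prod_mul` holds unconditionally.
theorem integral_pi_mul_compl [MeasurableSpace E] (ν : Measure E) [SigmaFinite ν]
    (A : Finset ι) (f : (↥A → E) → ℝ) (g : (↥Aᶜ → E) → ℝ) :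
    ∫ x : ι → E, f (fun i => x i) * g (fun i => x i) ∂(Measure.pi fun _ => ν) =
      (∫ y, f y ∂(Measure.pi fun _ => ν)) * ∫ z, g z ∂(Measure.pi fun _ => ν) := by
  have hsplit := ((measurePreserving_piCongrLeft (fun _ : ι => ν) A.sumComplEquiv).symm _).trans
    (measurePreserving_sumPiEquivProdPi (X := fun _ : ↥A ⊕ ↥Aᶜ => E) fun _ => ν)
  rw [← integral_prod_mul, ← hsplit.integral_comp']
  rfl

end PiSplit

section SignedGraphs

open Finset

variable {V : Type*}

theorem SimpleGraph.Reachable.iff_of_forall_adj {G : SimpleGraph V} {P : V → Prop}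
    (hP : ∀ a b, G.Adj a b → (P a ↔ P b)) {u v : V} (h : G.Reachable u v) : P u ↔ P v := by
  rw [SimpleGraph.reachable_iff_reflTransGen] at h
  induction h with
  | refl => rfl
  | tail _ hadj ih => exact ih.trans (hP _ _ hadj)

def liftEdge (S : Finset V) : Sym2 S × ℤˣ ↪ Sym2 V × ℤˣ where
  toFun q := (q.1.map Subtype.val, q.2)
  inj' q r h := by
    obtain ⟨h1, h2⟩ := Prod.mk.inj h
    exact Prod.ext (Sym2.map.injective Subtype.val_injective h1) h2

@[simp]
lemma liftEdge_mk (S : Finset V) (a b : S) (s : ℤˣ) :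
    liftEdge S (s(a, b), s) = (s(a.1, b.1), s) := rfl

lemma sgFactor_liftEdge {d : ℕ} (S : Finset V) (x : V → EuclideanSpace ℝ (Fin d))
    (q : Sym2 S × ℤˣ) : sgFactor x (liftEdge S q) = sgFactor (fun i : S => x i) q := by
  obtain ⟨e, s⟩ := q
  induction e using Sym2.ind
  rfl

lemma mem_map_liftEdge_mk {S : Finset V} {G : Finset (Sym2 S × ℤˣ)} {a b : V} {s : ℤˣ} :
    (s(a, b), s) ∈ G.map (liftEdge S) ↔
      ∃ (ha : a ∈ S) (hb : b ∈ S), (s(⟨a, ha⟩, ⟨b, hb⟩), s) ∈ G := by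
  constructor
  · intro h
    obtain ⟨⟨e, t⟩, hq, heq⟩ := mem_map.mp h
    induction e using Sym2.ind with
    | _ x y =>
      simp only [liftEdge_mk, Prod.mk.injEq, Sym2.eq_iff] at heq
      obtain ⟨⟨rfl, rfl⟩ | ⟨rfl, rfl⟩, rfl⟩ := heq
      · exact ⟨x.2, y.2, hq⟩
      · exact ⟨y.2, x.2, Sym2.eq_swap ▸ hq⟩
  · rintro ⟨_, _, h⟩
    exact mem_map_of_mem _ h

def restrictSG (S : Finset V) (G : Finset (Sym2 V × ℤˣ)) : Finset (Sym2 S × ℤˣ) :=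
  G.preimage (liftEdge S) (liftEdge S).injective.injOn

@[simp]
lemma mem_restrictSG {S : Finset V} {G : Finset (Sym2 V × ℤˣ)} {q : Sym2 S × ℤˣ} :
    q ∈ restrictSG S G ↔ liftEdge S q ∈ G :=
  mem_preimage

lemma map_liftEdge_restrictSG_subset (S : Finset V) (G : Finset (Sym2 V × ℤˣ)) :
    (restrictSG S G).map (liftEdge S) ⊆ G := by
  intro p hp
  obtain ⟨q, hq, rfl⟩ := mem_map.mp hp
  exact mem_restrictSG.mp hq

lemma forall_not_isDiag_restrictSG {S : Finset V} {G : Finset (Sym2 V × ℤˣ)}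
    (hG : ∀ p ∈ G, ¬ p.1.IsDiag) : ∀ q ∈ restrictSG S G, ¬ q.1.IsDiag :=
  fun _ hq hdiag => hG _ (mem_restrictSG.mp hq) hdiag.map

lemma reachable_of_map_liftEdge_subset {S : Finset V} {Gs : Finset (Sym2 S × ℤˣ)}
    {H : Finset (Sym2 V × ℤˣ)} (hsub : Gs.map (liftEdge S) ⊆ H) {a b : S}
    (h : (sgGraph Gs).Reachable a b) : (sgGraph H).Reachable a b :=
  h.map
    { toFun := Subtype.val
      map_rel' := by
        rintro a b ⟨hne, s, hs⟩
        exact ⟨Subtype.val_injective.ne hne, s, hsub (mem_map_of_mem _ hs)⟩ }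

lemma reachable_restrictSG {S : Finset V} {G : Finset (Sym2 V × ℤˣ)} {a : V}
    (hS : ∀ j, (sgGraph G).Reachable a j → j ∈ S) {b : V} (h : (sgGraph G).Reachable a b) :
    (sgGraph (restrictSG S G)).Reachable ⟨a, hS a .rfl⟩ ⟨b, hS b h⟩ := by
  have h' := SimpleGraph.reachable_iff_reflTransGen _ _ |>.mp h
  induction h' with
  | refl => rfl
  | tail hac hce ih =>
    obtain ⟨hne, s, hs⟩ := hce
    have hac' := (SimpleGraph.reachable_iff_reflTransGen _ _).mpr hac
    exact (ih hac').trans (SimpleGraph.Adj.reachable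
      ⟨fun h => hne (congrArg Subtype.val h), s, mem_restrictSG.mpr hs⟩)

lemma reachable_cycle {G : Finset (Sym2 V × ℤˣ)} {k : ℕ} {v : Fin (k + 3) → V}
    (hv : Function.Injective v) {σ : Fin (k + 3) → ℤˣ}
    (he : ∀ m, (s(v m, v (m + 1)), σ m) ∈ G) (m : Fin (k + 3)) :
    (sgGraph G).Reachable (v 0) (v m) := by
  induction m using Fin.induction with
  | zero => rfl
  | succ i ih =>
    have hsucc : (i.castSucc : Fin (k + 3)) + 1 = i.succ := Fin.coeSucc_eq_succ
    refine ih.trans (SimpleGraph.Adj.reachable ⟨hv.ne ?_, σ i.castSucc, hsucc ▸ he i.castSucc⟩)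
    exact (Fin.castSucc_lt_succ).ne

lemma HasUnbalancedCycleWithin.exists_component {G : Finset (Sym2 V × ℤˣ)} {W : Set V}
    (h : HasUnbalancedCycleWithin G W) :
    ∃ i, HasUnbalancedCycleWithin G {j | (sgGraph G).Reachable i j} := by
  rcases h with ⟨a, b, hab, -, -, h₁, h₂⟩ | ⟨k, v, hv, -, σ, he, hσ⟩
  · exact ⟨a, .inl ⟨a, b, hab, .rfl, SimpleGraph.Adj.reachable ⟨hab, 1, h₁⟩, h₁, h₂⟩⟩
  · exact ⟨v 0, .inr ⟨k, v, hv, reachable_cycle hv he, σ, he, hσ⟩⟩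

lemma HasUnbalancedCycleWithin.map {S : Finset V} {Gs : Finset (Sym2 S × ℤˣ)}
    {H : Finset (Sym2 V × ℤˣ)} (hsub : Gs.map (liftEdge S) ⊆ H) {W : Set S} {W' : Set V}
    (hW : ∀ a ∈ W, a.1 ∈ W') (h : HasUnbalancedCycleWithin Gs W) :
    HasUnbalancedCycleWithin H W' := by
  have hmem {a b : S} {s : ℤˣ} (hab : (s(a, b), s) ∈ Gs) : (s(a.1, b.1), s) ∈ H :=
    hsub (mem_map_of_mem _ hab)
  rcases h with ⟨a, b, hab, ha, hb, h₁, h₂⟩ | ⟨k, v, hv, hvW, σ, he, hσ⟩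
  · exact .inl ⟨a, b, Subtype.val_injective.ne hab, hW a ha, hW b hb, hmem h₁, hmem h₂⟩
  · exact .inr ⟨k, fun m => v m, Subtype.val_injective.comp hv, fun m => hW _ (hvW m), σ,
      fun m => hmem (he m), hσ⟩

lemma HasUnbalancedCycleWithin.restrictSG {S : Finset V} {G : Finset (Sym2 V × ℤˣ)}
    {W : Set V} {W' : Set S} (hWS : W ⊆ S) (hW : ∀ a : S, a.1 ∈ W → a ∈ W')
    (h : HasUnbalancedCycleWithin G W) : HasUnbalancedCycleWithin (restrictSG S G) W' := by
  rcases h with ⟨a, b, hab, ha, hb, h₁, h₂⟩ | ⟨k, v, hv, hvW, σ, he, hσ⟩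
  · exact .inl ⟨⟨a, hWS ha⟩, ⟨b, hWS hb⟩, fun h => hab (congrArg Subtype.val h), hW _ ha,
      hW _ hb, mem_restrictSG.mpr h₁, mem_restrictSG.mpr h₂⟩
  · exact .inr ⟨k, fun m => ⟨v m, hWS (hvW m)⟩, fun _ _ h => hv (congrArg Subtype.val h),
      fun m => hW _ (hvW m), σ, fun m => mem_restrictSG.mpr (he m), hσ⟩

theorem isBalancedSG_iff {G : Finset (Sym2 V × ℤˣ)} :
    IsBalancedSG G ↔ ¬ HasUnbalancedCycleWithin G Set.univ := by
  constructor
  · rintro ⟨hpair, hcycle⟩ (⟨a, b, hab, -, -, h₁, h₂⟩ | ⟨k, v, hv, -, σ, he, hσ⟩)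
    · exact hpair a b hab ⟨h₁, h₂⟩
    · exact absurd (hσ ▸ hcycle k v hv σ he) (by decide)
  · intro h
    refine ⟨fun a b hab hpair => h (.inl ⟨a, b, hab, trivial, trivial, hpair⟩),
      fun k v hv σ he => ?_⟩
    rcases Int.units_eq_one_or (∏ m, σ m) with hσ | hσ
    · exact hσ
    · exact absurd (.inr ⟨k, v, hv, fun _ => trivial, σ, he, hσ⟩) h

variable [Fintype V]

def balancedPart (G : Finset (Sym2 V × ℤˣ)) : Finset V :=
  univ.filter fun i => ¬ HasUnbalancedCycleWithin G {j | (sgGraph G).Reachable i j}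

lemma mem_balancedPart {G : Finset (Sym2 V × ℤˣ)} {i : V} :
    i ∈ balancedPart G ↔ ¬ HasUnbalancedCycleWithin G {j | (sgGraph G).Reachable i j} := by
  simp [balancedPart]

lemma mem_balancedPart_iff_of_reachable {G : Finset (Sym2 V × ℤˣ)} {i j : V}
    (h : (sgGraph G).Reachable i j) : i ∈ balancedPart G ↔ j ∈ balancedPart G := by
  have hcomp : {k | (sgGraph G).Reachable i k} = {k | (sgGraph G).Reachable j k} :=
    Set.ext fun k => ⟨h.symm.trans, h.trans⟩
  rw [mem_balancedPart, mem_balancedPart, hcomp]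

lemma isBalancedSG_restrictSG_balancedPart (G : Finset (Sym2 V × ℤˣ)) :
    IsBalancedSG (restrictSG (balancedPart G) G) := by
  rw [isBalancedSG_iff]
  intro h
  obtain ⟨i, hi⟩ := h.exists_component
  exact mem_balancedPart.mp i.2 <| hi.map (map_liftEdge_restrictSG_subset _ G)
    fun _ => reachable_of_map_liftEdge_subset (map_liftEdge_restrictSG_subset _ G)

variable [DecidableEq V]

def glueSG (A : Finset V) (Gb : Finset (Sym2 A × ℤˣ)) (Gu : Finset (Sym2 ↥Aᶜ × ℤˣ)) :
    Finset (Sym2 V × ℤˣ) :=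
  Gb.map (liftEdge A) ∪ Gu.map (liftEdge Aᶜ)

lemma liftEdge_ne_liftEdge_compl (A : Finset V) (q : Sym2 A × ℤˣ) (r : Sym2 ↥Aᶜ × ℤˣ) :
    liftEdge A q ≠ liftEdge Aᶜ r := by
  obtain ⟨e, s⟩ := q
  obtain ⟨e', s'⟩ := r
  induction e using Sym2.ind with
  | _ a b =>
    induction e' using Sym2.ind with
    | _ c d =>
      simp only [liftEdge_mk, ne_eq, Prod.mk.injEq, Sym2.eq_iff, not_and]
      rintro (⟨h, -⟩ | ⟨h, -⟩) -
      · exact mem_compl.mp (h ▸ c.2) a.2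
      · exact mem_compl.mp (h ▸ d.2) a.2

lemma disjoint_map_liftEdge_compl (A : Finset V) (Gb : Finset (Sym2 A × ℤˣ))
    (Gu : Finset (Sym2 ↥Aᶜ × ℤˣ)) :
    Disjoint (Gb.map (liftEdge A)) (Gu.map (liftEdge Aᶜ)) := by
  simp only [disjoint_left, mem_map]
  rintro _ ⟨q, -, rfl⟩ ⟨r, -, hr⟩
  exact liftEdge_ne_liftEdge_compl A q r hr.symm

lemma forall_not_isDiag_glueSG {A : Finset V} {Gb : Finset (Sym2 A × ℤˣ)}
    {Gu : Finset (Sym2 ↥Aᶜ × ℤˣ)} (hb : ∀ q ∈ Gb, ¬ q.1.IsDiag) (hu : ∀ q ∈ Gu, ¬ q.1.IsDiag) :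
    ∀ p ∈ glueSG A Gb Gu, ¬ p.1.IsDiag := by
  simp only [glueSG, mem_union, mem_map]
  rintro _ (⟨q, hq, rfl⟩ | ⟨q, hq, rfl⟩) hdiag
  · exact hb q hq ((Sym2.isDiag_map Subtype.val_injective).mp hdiag)
  · exact hu q hq ((Sym2.isDiag_map Subtype.val_injective).mp hdiag)

lemma prod_sgFactor_glueSG {d : ℕ} (A : Finset V) (Gb : Finset (Sym2 A × ℤˣ))
    (Gu : Finset (Sym2 ↥Aᶜ × ℤˣ)) (x : V → EuclideanSpace ℝ (Fin d)) :
    ∏ p ∈ glueSG A Gb Gu, sgFactor x p =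
      (∏ q ∈ Gb, sgFactor (fun i : A => x i) q) * ∏ q ∈ Gu, sgFactor (fun i : ↥Aᶜ => x i) q := by
  simp only [glueSG, prod_union (disjoint_map_liftEdge_compl A Gb Gu), prod_map,
    sgFactor_liftEdge]

theorem setIntegral_prod_sgFactor_glueSG {d : ℕ} (Λ : Set (EuclideanSpace ℝ (Fin d)))
    (A : Finset V) (Gb : Finset (Sym2 A × ℤˣ)) (Gu : Finset (Sym2 ↥Aᶜ × ℤˣ)) :
    ∫ x in {x : V → EuclideanSpace ℝ (Fin d) | ∀ i, x i ∈ Λ}, ∏ p ∈ glueSG A Gb Gu, sgFactor x p =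
      (∫ y in {y : A → EuclideanSpace ℝ (Fin d) | ∀ i, y i ∈ Λ}, ∏ q ∈ Gb, sgFactor y q) *
        ∫ z in {z : ↥Aᶜ → EuclideanSpace ℝ (Fin d) | ∀ i, z i ∈ Λ}, ∏ q ∈ Gu, sgFactor z q := by
  simp only [setIntegral_forall_mem_eq_integral_pi, prod_sgFactor_glueSG]
  exact integral_pi_mul_compl (volume.restrict Λ) A (fun y => ∏ q ∈ Gb, sgFactor y q)
    fun z => ∏ q ∈ Gu, sgFactor z q

lemma restrictSG_glueSG_left (A : Finset V) (Gb : Finset (Sym2 A × ℤˣ))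
    (Gu : Finset (Sym2 ↥Aᶜ × ℤˣ)) : restrictSG A (glueSG A Gb Gu) = Gb := by
  ext q
  rw [mem_restrictSG, glueSG, mem_union, mem_map', or_iff_left]
  intro h
  obtain ⟨r, -, hr⟩ := mem_map.mp h
  exact liftEdge_ne_liftEdge_compl A q r hr.symm

lemma restrictSG_glueSG_right (A : Finset V) (Gb : Finset (Sym2 A × ℤˣ))
    (Gu : Finset (Sym2 ↥Aᶜ × ℤˣ)) : restrictSG Aᶜ (glueSG A Gb Gu) = Gu := by
  ext q
  rw [mem_restrictSG, glueSG, mem_union, mem_map', or_iff_right]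
  intro h
  obtain ⟨r, -, hr⟩ := mem_map.mp h
  exact liftEdge_ne_liftEdge_compl A r q hr

lemma mem_iff_of_adj_glueSG {A : Finset V} {Gb : Finset (Sym2 A × ℤˣ)}
    {Gu : Finset (Sym2 ↥Aᶜ × ℤˣ)} {a b : V} (h : (sgGraph (glueSG A Gb Gu)).Adj a b) :
    a ∈ A ↔ b ∈ A := by
  obtain ⟨-, s, hs⟩ := h
  rcases mem_union.mp hs with hs | hs <;> obtain ⟨ha, hb, -⟩ := mem_map_liftEdge_mk.mp hs
  · exact iff_of_true ha hb
  · exact iff_of_false (mem_compl.mp ha) (mem_compl.mp hb)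

lemma glueSG_restrictSG {A : Finset V} {G : Finset (Sym2 V × ℤˣ)}
    (hA : ∀ a b, (sgGraph G).Adj a b → (a ∈ A ↔ b ∈ A)) :
    glueSG A (restrictSG A G) (restrictSG Aᶜ G) = G := by
  ext ⟨e, s⟩
  induction e using Sym2.ind with
  | _ a b =>
    simp only [glueSG, mem_union, mem_map_liftEdge_mk, mem_restrictSG, liftEdge_mk,
      exists_prop, mem_compl]
    have hab : (s(a, b), s) ∈ G → (a ∈ A ↔ b ∈ A) := fun h =>
      if hne : a = b then hne ▸ .rfl else hA a b ⟨hne, s, h⟩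
    tauto

lemma spansUnbalanced_restrictSG_compl_balancedPart (G : Finset (Sym2 V × ℤˣ)) :
    SpansUnbalanced (restrictSG (balancedPart G)ᶜ G) := by
  rintro ⟨i, hi⟩
  have hcompl : ∀ j, (sgGraph G).Reachable i j → j ∈ (balancedPart G)ᶜ := fun j hj =>
    mem_compl.mpr fun hj' => mem_compl.mp hi ((mem_balancedPart_iff_of_reachable hj).mpr hj')
  exact (not_not.mp (mem_balancedPart.not.mp (mem_compl.mp hi))).restrictSG hcompl
    fun ⟨j, _⟩ hj => reachable_restrictSG hcompl hj

lemma balancedPart_glueSG {A : Finset V} {Gb : Finset (Sym2 A × ℤˣ)}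
    {Gu : Finset (Sym2 ↥Aᶜ × ℤˣ)} (hb : IsBalancedSG Gb) (hu : SpansUnbalanced Gu) :
    balancedPart (glueSG A Gb Gu) = A := by
  ext i
  rw [mem_balancedPart]
  by_cases hi : i ∈ A
  · refine iff_of_true (fun h => isBalancedSG_iff.mp hb ?_) hi
    rw [← restrictSG_glueSG_left A Gb Gu]
    refine h.restrictSG (fun j hj => ?_) fun _ _ => trivial
    exact (SimpleGraph.Reachable.iff_of_forall_adj (fun _ _ => mem_iff_of_adj_glueSG) hj).mp hi
  · refine iff_of_false (not_not.mpr ?_) hi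
    exact (hu ⟨i, mem_compl.mpr hi⟩).map subset_union_right
      fun _ => reachable_of_map_liftEdge_subset subset_union_right

theorem sum_balancedPart_fiber_eq {M : Type*} [AddCommMonoid M] (A : Finset V)
    (F : Finset (Sym2 V × ℤˣ) → M) :
    ∑ G ∈ univ.filter (fun G : Finset (Sym2 V × ℤˣ) => ∀ p ∈ G, ¬ p.1.IsDiag)
        with balancedPart G = A, F G =
      ∑ P ∈ (univ.filter fun Gb : Finset (Sym2 A × ℤˣ) =>
          (∀ p ∈ Gb, ¬ p.1.IsDiag) ∧ IsBalancedSG Gb) ×ˢ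
        (univ.filter fun Gu : Finset (Sym2 ↥Aᶜ × ℤˣ) =>
          (∀ p ∈ Gu, ¬ p.1.IsDiag) ∧ SpansUnbalanced Gu),
        F (glueSG A P.1 P.2) := by
  have hsides (G : Finset (Sym2 V × ℤˣ)) :
      ∀ a b, (sgGraph G).Adj a b → (a ∈ balancedPart G ↔ b ∈ balancedPart G) :=
    fun _ _ h => mem_balancedPart_iff_of_reachable h.reachable
  refine sum_nbij' (fun G => (restrictSG A G, restrictSG Aᶜ G)) (fun P => glueSG A P.1 P.2)
    ?_ ?_ ?_ ?_ ?_
  · simp only [mem_filter, mem_univ, true_and, mem_product, and_imp]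
    rintro G hG rfl
    exact ⟨⟨forall_not_isDiag_restrictSG hG, isBalancedSG_restrictSG_balancedPart G⟩,
      forall_not_isDiag_restrictSG hG, spansUnbalanced_restrictSG_compl_balancedPart G⟩
  · simp only [mem_filter, mem_univ, true_and, mem_product, and_imp]
    intro P hb hbal hu hunb
    exact ⟨forall_not_isDiag_glueSG hb hu, balancedPart_glueSG hbal hunb⟩
  · simp only [mem_filter, mem_univ, true_and, and_imp]
    rintro G - rfl
    exact glueSG_restrictSG (hsides G)
  · intro P _
    simp only [restrictSG_glueSG_left, restrictSG_glueSG_right]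
  · simp only [mem_filter, mem_univ, true_and, and_imp]
    rintro G - rfl
    rw [glueSG_restrictSG (hsides G)]

end SignedGraphs

theorem balanced_unbalanced_factorization_general (d n : ℕ)
    (Λ : Set (EuclideanSpace ℝ (Fin d))) :
    (∑ G ∈ Finset.univ.filter (fun G : Finset (Sym2 (Fin n) × ℤˣ) =>
        ∀ p ∈ G, ¬ p.1.IsDiag),
      ∫ x in {x : Fin n → EuclideanSpace ℝ (Fin d) | ∀ i, x i ∈ Λ},
        ∏ p ∈ G, sgFactor x p)
    = ∑ A : Finset (Fin n),
        (∑ Gb ∈ Finset.univ.filter (fun Gb : Finset (Sym2 ↥A × ℤˣ) =>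
            (∀ p ∈ Gb, ¬ p.1.IsDiag) ∧ IsBalancedSG Gb),
          ∫ x in {x : ↥A → EuclideanSpace ℝ (Fin d) | ∀ i, x i ∈ Λ},
            ∏ p ∈ Gb, sgFactor x p)
        * (∑ Gu ∈ Finset.univ.filter (fun Gu : Finset (Sym2 ↥(Aᶜ) × ℤˣ) =>
            (∀ p ∈ Gu, ¬ p.1.IsDiag) ∧ SpansUnbalanced Gu),
          ∫ x in {x : ↥(Aᶜ) → EuclideanSpace ℝ (Fin d) | ∀ i, x i ∈ Λ},
            ∏ p ∈ Gu, sgFactor x p) := by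
  rw [← Finset.sum_fiberwise _ balancedPart]
  refine Finset.sum_congr rfl fun A _ => ?_
  rw [sum_balancedPart_fiber_eq, Finset.sum_mul_sum, ← Finset.sum_product']
  exact Finset.sum_congr rfl fun P _ => setIntegral_prod_sgFactor_glueSG Λ A P.1 P.2

/-- **Balanced–unbalanced factorization** (coefficient form of equations (4.5)–(4.6)):
the signed-graph generating integral over all signed graphs on `{1,…,n}` factorizes
over the partition of the vertex set into the balanced part `A` and the unbalanced
part `Aᶜ`. -/
theorem balanced_unbalanced_factorization (d n : ℕ) (hd : 1 ≤ d) (hn : 1 ≤ n)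
    (Λ : Set (EuclideanSpace ℝ (Fin d))) (hmeas : MeasurableSet Λ)
    (hfin : volume Λ < ⊤) :
    (∑ G ∈ Finset.univ.filter (fun G : Finset (Sym2 (Fin n) × ℤˣ) =>
        ∀ p ∈ G, ¬ p.1.IsDiag),
      ∫ x in {x : Fin n → EuclideanSpace ℝ (Fin d) | ∀ i, x i ∈ Λ},
        ∏ p ∈ G, sgFactor x p)
    = ∑ A : Finset (Fin n),
        (∑ Gb ∈ Finset.univ.filter (fun Gb : Finset (Sym2 ↥A × ℤˣ) =>
            (∀ p ∈ Gb, ¬ p.1.IsDiag) ∧ IsBalancedSG Gb),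
          ∫ x in {x : ↥A → EuclideanSpace ℝ (Fin d) | ∀ i, x i ∈ Λ},
            ∏ p ∈ Gb, sgFactor x p)
        * (∑ Gu ∈ Finset.univ.filter (fun Gu : Finset (Sym2 ↥(Aᶜ) × ℤˣ) =>
            (∀ p ∈ Gu, ¬ p.1.IsDiag) ∧ SpansUnbalanced Gu),
          ∫ x in {x : ↥(Aᶜ) → EuclideanSpace ℝ (Fin d) | ∀ i, x i ∈ Λ},
            ∏ p ∈ Gu, sgFactor x p) :=
  balanced_unbalanced_factorization_general d n Λ
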